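/- Let G = (V,E,w) be strongly connected with diameter d and max edge weight magnitude w_max. Then the optimal value of the penalized problem min_{P ∈ Δ_E} ⟨P,W⟩ + 3 d w_max ‖P𝟏 - Pᵀ𝟏‖₁ equals μ(G), the min-mean-cycle value of G (i.e., the penalty formulation is exact). -/

import Mathlib

/-!
A minimum-mean cycle, carrying the uniform distribution on its edges, is a balanced point of
`Δ_E` of value `μ`, so the penalized minimum is at most `μ`. Conversely, the reduced weights
`w - μ` have no negative cycle, hence no negative closed walk, so the shortest-walk distances
`π` from a fixed vertex are finite and satisfy `π j ≤ π i + w(i,j) - μ` on every edge; as every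
vertex is within `d` steps of the source and back, `|π| ≤ 2 d w_max`. Pairing `P` with `π` gives
`⟨P,W⟩ ≥ μ - 2 d w_max ‖P𝟏 - Pᵀ𝟏‖₁`, so the penalty `3 d w_max` makes every `P` worth at least `μ`.
-/

open Finset

/-- A directed cycle: a nonempty list of distinct vertices whose consecutive
pairs (cyclically) are edges of `E`. -/
def IsCycle {n : ℕ} (E : Finset (Fin n × Fin n)) (c : List (Fin n)) : Prop :=
  c ≠ [] ∧ c.Nodup ∧ ∀ p ∈ c.zip (c.rotate 1), p ∈ E

/-- Mean weight of a cycle. -/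
noncomputable def meanWeight {n : ℕ} (w : Fin n × Fin n → ℝ) (c : List (Fin n)) : ℝ :=
  ((c.zip (c.rotate 1)).map w).sum / c.length

/-- Min-mean-cycle value of the digraph `(V, E, w)`. -/
noncomputable def mmc {n : ℕ} (E : Finset (Fin n × Fin n)) (w : Fin n × Fin n → ℝ) : ℝ :=
  sInf {x : ℝ | ∃ c, IsCycle E c ∧ meanWeight w c = x}

/-- Membership in `Δ_E`: a nonnegative matrix supported on `E` with total sum 1. -/
def InDeltaE {n : ℕ} (E : Finset (Fin n × Fin n)) (P : Matrix (Fin n) (Fin n) ℝ) : Prop :=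
  (∀ i j, 0 ≤ P i j) ∧ (∀ i j, (i, j) ∉ E → P i j = 0) ∧ (∑ i, ∑ j, P i j) = 1

/-- A circulation: netflow is balanced at every vertex. -/
def IsBalanced {n : ℕ} (P : Matrix (Fin n) (Fin n) ℝ) : Prop :=
  ∀ i, (∑ j, P i j) = ∑ j, P j i

/-- Total netflow imbalance `‖P𝟏 - Pᵀ𝟏‖₁`. -/
noncomputable def imb {n : ℕ} (P : Matrix (Fin n) (Fin n) ℝ) : ℝ :=
  ∑ i, |(∑ j, P i j) - ∑ j, P j i|

/-- Entrywise ℓ₁ norm of a matrix. -/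
noncomputable def l1 {n : ℕ} (P : Matrix (Fin n) (Fin n) ℝ) : ℝ :=
  ∑ i, ∑ j, |P i j|

/-- There is a directed path from `i` to `j` of length at most `d`. -/
def ConnectsWithin {n : ℕ} (E : Finset (Fin n × Fin n)) (d : ℕ) (i j : Fin n) : Prop :=
  ∃ l : List (Fin n), l.length ≤ d ∧ List.Chain (fun a b => (a, b) ∈ E) i l ∧
    (i :: l).getLast (List.cons_ne_nil _ _) = j

/-- A directed walk from `s` to `v` along edges of `E`, recorded by its
list of vertices after `s`. -/
def IsWalkFrom {n : ℕ} (E : Finset (Fin n × Fin n)) (s v : Fin n) (l : List (Fin n)) : Prop :=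
  List.Chain (fun a b => (a, b) ∈ E) s l ∧ (s :: l).getLast (List.cons_ne_nil _ _) = v

/-- Weight of a walk. -/
noncomputable def walkWeight {n : ℕ} (w : Fin n × Fin n → ℝ) (s : Fin n) (l : List (Fin n)) : ℝ :=
  (((s :: l).zip l).map w).sum

section CyclicPairs

variable {α : Type*}

def cyclicPairs (c : List α) : List (α × α) := c.zip (c.rotate 1)

@[simp]
lemma length_cyclicPairs (c : List α) : (cyclicPairs c).length = c.length := by
  simp [cyclicPairs]

lemma map_fst_cyclicPairs (c : List α) : (cyclicPairs c).map Prod.fst = c :=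
  List.map_fst_zip (by simp)

lemma map_snd_cyclicPairs (c : List α) : (cyclicPairs c).map Prod.snd = c.rotate 1 :=
  List.map_snd_zip (by simp)

lemma cyclicPairs_rotate (c : List α) (k : ℕ) :
    cyclicPairs (c.rotate k) = (cyclicPairs c).rotate k := by
  rw [cyclicPairs, List.rotate_rotate, add_comm, ← List.rotate_rotate, cyclicPairs, List.zip,
    List.zipWith_rotate_distrib _ _ _ _ (by simp)]

lemma cyclicPairs_cons_append_cons (a : α) (l₁ l₂ : List α) :
    cyclicPairs (a :: l₁ ++ a :: l₂) = cyclicPairs (a :: l₁) ++ cyclicPairs (a :: l₂) := by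
  have hrot : (a :: l₁ ++ a :: l₂).rotate 1 = (l₁ ++ [a]) ++ (l₂ ++ [a]) := by simp
  rw [cyclicPairs, hrot, List.zip_append (by simp)]
  simp [cyclicPairs]

lemma zip_cons_append_singleton (a : α) (l : List α) :
    (a :: l ++ [a]).zip (l ++ [a]) = cyclicPairs (a :: l) := by
  conv_lhs => rw [← List.append_nil (l ++ [a])]
  rw [List.zip_append (by simp)]
  simp [cyclicPairs]

lemma exists_eq_append_cons_append_cons_of_not_nodup {l : List α} (h : ¬l.Nodup) :
    ∃ l₁ a l₂ l₃, l = l₁ ++ a :: (l₂ ++ a :: l₃) := by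
  obtain ⟨a, ha⟩ := by simpa [List.nodup_iff_sublist] using h
  obtain ⟨r₁, r₂, rfl, har₁, har₂⟩ := List.cons_sublist_iff.1 ha
  obtain ⟨l₁, l₂, rfl⟩ := List.append_of_mem har₁
  obtain ⟨l₃, l₄, rfl⟩ := List.append_of_mem (List.singleton_sublist.1 har₂)
  exact ⟨l₁, a, l₂ ++ l₃, l₄, by simp⟩

end CyclicPairs

section CycleWeight

variable {α M : Type*} [AddCommMonoid M]

def cycleWeight (W : α × α → M) (c : List α) : M := ((cyclicPairs c).map W).sum

lemma cycleWeight_rotate (W : α × α → M) (c : List α) (k : ℕ) :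
    cycleWeight W (c.rotate k) = cycleWeight W c := by
  rw [cycleWeight, cyclicPairs_rotate, List.map_rotate, (List.rotate_perm _ k).sum_eq, cycleWeight]

lemma cycleWeight_cons_append_cons (W : α × α → M) (a : α) (l₁ l₂ : List α) :
    cycleWeight W (a :: l₁ ++ a :: l₂) = cycleWeight W (a :: l₁) + cycleWeight W (a :: l₂) := by
  simp only [cycleWeight, cyclicPairs_cons_append_cons, List.map_append, List.sum_append]

end CycleWeight

lemma cycleWeight_nonneg_of_closed {n : ℕ} {E : Finset (Fin n × Fin n)} {W : Fin n × Fin n → ℝ}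
    (hcyc : ∀ c, IsCycle E c → 0 ≤ cycleWeight W c) {c : List (Fin n)}
    (hc : ∀ p ∈ cyclicPairs c, p ∈ E) : 0 ≤ cycleWeight W c := by
  induction hlen : c.length using Nat.strong_induction_on generalizing c with
  | _ k ih =>
  rcases eq_or_ne c [] with rfl | hne
  · simp [cycleWeight, cyclicPairs]
  by_cases hnd : c.Nodup
  · exact hcyc c ⟨hne, hnd, hc⟩
  obtain ⟨l₁, a, l₂, l₃, rfl⟩ := exists_eq_append_cons_append_cons_of_not_nodup hnd
  -- bring a repeated vertex to the front; the closed walk splits there into two shorter ones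
  have hrot : (l₁ ++ a :: (l₂ ++ a :: l₃)).rotate l₁.length = a :: l₂ ++ a :: (l₃ ++ l₁) := by
    simp [List.rotate_append_length_eq]
  have hc' : ∀ p ∈ cyclicPairs (a :: l₂ ++ a :: (l₃ ++ l₁)), p ∈ E := by
    intro p hp
    rw [← hrot, cyclicPairs_rotate, List.mem_rotate] at hp
    exact hc p hp
  rw [cyclicPairs_cons_append_cons] at hc'
  rw [← cycleWeight_rotate W _ l₁.length, hrot, cycleWeight_cons_append_cons]
  subst hlen
  exact add_nonneg
    (ih _ (by simp; omega) (fun p hp => hc' p (List.mem_append_left _ hp)) rfl)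
    (ih _ (by simp; omega) (fun p hp => hc' p (List.mem_append_right _ hp)) rfl)

section Walks

variable {n : ℕ} {E : Finset (Fin n × Fin n)} {W : Fin n × Fin n → ℝ} {s v x : Fin n}
  {l l₁ l₂ : List (Fin n)}

@[simp]
lemma isWalkFrom_nil : IsWalkFrom E s v [] ↔ s = v :=
  ⟨fun h => h.2, fun h => ⟨List.IsChain.singleton s, h⟩⟩

@[simp]
lemma isWalkFrom_cons {a : Fin n} :
    IsWalkFrom E s v (a :: l) ↔ (s, a) ∈ E ∧ IsWalkFrom E a v l := by
  show List.IsChain _ (s :: a :: l) ∧ _ ↔ _ ∧ List.IsChain _ (a :: l) ∧ _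
  rw [List.isChain_cons_cons, List.getLast_cons (List.cons_ne_nil _ _), and_assoc]

@[simp]
lemma walkWeight_nil (W : Fin n × Fin n → ℝ) (s : Fin n) : walkWeight W s [] = 0 := by
  simp [walkWeight]

@[simp]
lemma walkWeight_cons (W : Fin n × Fin n → ℝ) (s a : Fin n) (l : List (Fin n)) :
    walkWeight W s (a :: l) = W (s, a) + walkWeight W a l := by
  simp [walkWeight]

lemma IsWalkFrom.append (h₁ : IsWalkFrom E s x l₁) (h₂ : IsWalkFrom E x v l₂) :
    IsWalkFrom E s v (l₁ ++ l₂) := by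
  induction l₁ generalizing s with
  | nil => rwa [isWalkFrom_nil.1 h₁]
  | cons a t ih =>
    rw [isWalkFrom_cons] at h₁
    exact isWalkFrom_cons.2 ⟨h₁.1, ih h₁.2⟩

lemma walkWeight_append (h₁ : IsWalkFrom E s x l₁) (l₂ : List (Fin n)) :
    walkWeight W s (l₁ ++ l₂) = walkWeight W s l₁ + walkWeight W x l₂ := by
  induction l₁ generalizing s with
  | nil => simp [isWalkFrom_nil.1 h₁]
  | cons a t ih =>
    rw [isWalkFrom_cons] at h₁
    simp [ih h₁.2, add_assoc]

lemma IsWalkFrom.mem_of_mem_zip (h : IsWalkFrom E s v l) : ∀ p ∈ (s :: l).zip l, p ∈ E := by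
  induction l generalizing s with
  | nil => simp
  | cons a t ih =>
    rw [isWalkFrom_cons] at h
    simp only [List.zip_cons_cons, List.mem_cons, forall_eq_or_imp]
    exact ⟨h.1, ih h.2⟩

lemma IsWalkFrom.walkWeight_le {K : ℝ} (h : IsWalkFrom E s v l) (hK : ∀ e ∈ E, W e ≤ K) :
    walkWeight W s l ≤ l.length * K := by
  have := List.sum_le_card_nsmul (((s :: l).zip l).map W) K (by
    simpa only [List.forall_mem_map] using fun p hp => hK p (h.mem_of_mem_zip p hp))
  simpa [walkWeight] using this

lemma IsWalkFrom.walkWeight_nonneg_of_closed (hcyc : ∀ c, IsCycle E c → 0 ≤ cycleWeight W c)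
    (h : IsWalkFrom E s s l) : 0 ≤ walkWeight W s l := by
  rcases l.eq_nil_or_concat with rfl | ⟨l, b, rfl⟩
  · simp
  obtain rfl : s = b := by simpa [IsWalkFrom] using h.2.symm
  have hzip : (s :: (l ++ [s])).zip (l ++ [s]) = cyclicPairs (s :: l) :=
    zip_cons_append_singleton s l
  rw [List.concat_eq_append, walkWeight, hzip]
  rw [List.concat_eq_append] at h
  exact cycleWeight_nonneg_of_closed hcyc (hzip ▸ h.mem_of_mem_zip)

end Walks

section Potential

variable {n : ℕ} {E : Finset (Fin n × Fin n)} {W : Fin n × Fin n → ℝ} {d : ℕ} {K : ℝ}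

lemma ConnectsWithin.exists_walkWeight_le {s v : Fin n} (h : ConnectsWithin E d s v)
    (hK : ∀ e ∈ E, W e ≤ K) (hK₀ : 0 ≤ K) :
    ∃ l, IsWalkFrom E s v l ∧ walkWeight W s l ≤ d * K := by
  obtain ⟨l, hld, hl⟩ := h
  refine ⟨l, hl, (IsWalkFrom.walkWeight_le hl hK).trans ?_⟩
  gcongr

/-- Shortest-walk distances from `s` form a feasible potential for the reduced weights `W`. -/
theorem exists_potential (hcyc : ∀ c, IsCycle E c → 0 ≤ cycleWeight W c)
    (hconn : ∀ i j, ConnectsWithin E d i j) (hK : ∀ e ∈ E, W e ≤ K) (hK₀ : 0 ≤ K) (s : Fin n) :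
    ∃ π : Fin n → ℝ, (∀ i j, (i, j) ∈ E → π j ≤ π i + W (i, j)) ∧ ∀ v, |π v| ≤ d * K := by
  set S : Fin n → Set ℝ := fun v => {x | ∃ l, IsWalkFrom E s v l ∧ walkWeight W s l = x}
  have hshort : ∀ v, ∃ x ∈ S v, x ≤ d * K := fun v => by
    obtain ⟨l, hl, hlK⟩ := (hconn s v).exists_walkWeight_le hK hK₀
    exact ⟨_, ⟨l, hl, rfl⟩, hlK⟩
  -- closing a walk `s → v` by a short walk back to `s` gives a nonnegative closed walk
  have hlower : ∀ v, ∀ x ∈ S v, -(d * K) ≤ x := by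
    rintro v _ ⟨l, hl, rfl⟩
    obtain ⟨r, hr, hrK⟩ := (hconn v s).exists_walkWeight_le hK hK₀
    have := (hl.append hr).walkWeight_nonneg_of_closed hcyc
    rw [walkWeight_append hl] at this
    linarith
  have hne : ∀ v, (S v).Nonempty := fun v => (hshort v).imp fun _ hx => hx.1
  have hbdd : ∀ v, BddBelow (S v) := fun v => ⟨_, hlower v⟩
  refine ⟨fun v => sInf (S v), fun i j hij => ?_, fun v => abs_le.2 ⟨?_, ?_⟩⟩
  · rw [← sub_le_iff_le_add]
    refine le_csInf (hne i) ?_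
    rintro _ ⟨l, hl, rfl⟩
    have hl' : IsWalkFrom E s j (l ++ [j]) := hl.append (by simpa using hij)
    have := csInf_le (hbdd j) ⟨_, hl', rfl⟩
    rw [walkWeight_append hl] at this
    simp only [walkWeight_cons, walkWeight_nil, add_zero] at this
    linarith
  · exact le_csInf (hne v) (hlower v)
  · obtain ⟨x, hx, hxK⟩ := hshort v
    exact (csInf_le (hbdd v) hx).trans hxK

end Potential

section Circulation

variable {n : ℕ}

lemma imb_nonneg (P : Matrix (Fin n) (Fin n) ℝ) : 0 ≤ imb P :=
  Finset.sum_nonneg fun _ _ => abs_nonneg _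

lemma IsBalanced.imb_eq_zero {P : Matrix (Fin n) (Fin n) ℝ} (hP : IsBalanced P) : imb P = 0 :=
  Finset.sum_eq_zero fun i _ => by rw [hP i, sub_self, abs_zero]

lemma sum_mul_sub_eq {ι R : Type*} [Fintype ι] [CommRing R] (P : Matrix ι ι R) (π : ι → R) :
    ∑ i, ∑ j, P i j * (π j - π i) = ∑ v, π v * ((∑ i, P i v) - ∑ j, P v j) := by
  simp only [mul_sub, Finset.sum_sub_distrib, Finset.mul_sum]
  rw [Finset.sum_comm]
  simp only [mul_comm]

lemma abs_sum_mul_sub_le (P : Matrix (Fin n) (Fin n) ℝ) {π : Fin n → ℝ} {B : ℝ}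
    (hπ : ∀ v, |π v| ≤ B) : |∑ i, ∑ j, P i j * (π j - π i)| ≤ B * imb P := by
  rw [sum_mul_sub_eq, imb, Finset.mul_sum]
  refine (Finset.abs_sum_le_sum_abs _ _).trans (Finset.sum_le_sum fun v _ => ?_)
  rw [abs_mul, abs_sub_comm]
  exact mul_le_mul_of_nonneg_right (hπ v) (abs_nonneg _)

/-- Weak LP duality, with `π` as the dual variables of the balance constraints. -/
theorem sub_mul_imb_le_of_potential {E : Finset (Fin n × Fin n)} {w : Fin n × Fin n → ℝ}
    {P : Matrix (Fin n) (Fin n) ℝ} (hP : InDeltaE E P) {μ B : ℝ} {π : Fin n → ℝ}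
    (hπE : ∀ i j, (i, j) ∈ E → π j ≤ π i + (w (i, j) - μ)) (hπB : ∀ v, |π v| ≤ B) :
    μ - B * imb P ≤ ∑ i, ∑ j, P i j * w (i, j) := by
  obtain ⟨hP₀, hPE, hP₁⟩ := hP
  have hterm : ∀ i j, P i j * (μ + (π j - π i)) ≤ P i j * w (i, j) := fun i j => by
    by_cases hij : (i, j) ∈ E
    · exact mul_le_mul_of_nonneg_left (by linarith [hπE i j hij]) (hP₀ i j)
    · simp [hPE i j hij]
  calc μ - B * imb P ≤ μ + ∑ i, ∑ j, P i j * (π j - π i) := by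
        linarith [neg_abs_le (∑ i, ∑ j, P i j * (π j - π i)), abs_sum_mul_sub_le P hπB]
    _ = ∑ i, ∑ j, P i j * (μ + (π j - π i)) := by
        simp only [mul_add, Finset.sum_add_distrib, ← Finset.sum_mul, hP₁, one_mul]
    _ ≤ ∑ i, ∑ j, P i j * w (i, j) :=
        Finset.sum_le_sum fun i _ => Finset.sum_le_sum fun j _ => hterm i j

end Circulation

section EdgeFrequency

variable {n : ℕ}

noncomputable def edgeFrequency (L : List (Fin n × Fin n)) : Matrix (Fin n) (Fin n) ℝ :=
  fun i j => Multiset.count (i, j) (L : Multiset (Fin n × Fin n)) / L.length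

lemma sum_edgeFrequency_mul (L : List (Fin n × Fin n)) (f : Fin n × Fin n → ℝ) :
    ∑ i, ∑ j, edgeFrequency L i j * f (i, j) = (L.map f).sum / L.length := by
  symm
  rw [← Multiset.sum_coe, ← Multiset.map_coe, Finset.sum_multiset_map_count, Finset.sum_div,
    Finset.sum_subset (Finset.subset_univ _) fun p _ hp => by
      rw [Multiset.count_eq_zero.2 (by simpa using hp), zero_smul, zero_div],
    ← Finset.univ_product_univ, Finset.sum_product]
  simp only [edgeFrequency, nsmul_eq_mul, div_mul_eq_mul_div]

lemma sum_edgeFrequency_row (L : List (Fin n × Fin n)) (v : Fin n) :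
    ∑ j, edgeFrequency L v j =
      ((L.map Prod.fst).map fun a => if a = v then (1 : ℝ) else 0).sum / L.length := by
  rw [List.map_map, ← sum_edgeFrequency_mul]
  simp

lemma sum_edgeFrequency_col (L : List (Fin n × Fin n)) (v : Fin n) :
    ∑ i, edgeFrequency L i v =
      ((L.map Prod.snd).map fun a => if a = v then (1 : ℝ) else 0).sum / L.length := by
  rw [List.map_map, ← sum_edgeFrequency_mul]
  simp

lemma inDeltaE_edgeFrequency {E : Finset (Fin n × Fin n)} {L : List (Fin n × Fin n)}
    (hL : L ≠ []) (hLE : ∀ p ∈ L, p ∈ E) : InDeltaE E (edgeFrequency L) := by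
  refine ⟨fun i j => by unfold edgeFrequency; positivity, fun i j hij => ?_, ?_⟩
  · simp [edgeFrequency, show (i, j) ∉ L from fun h => hij (hLE _ h)]
  · have := sum_edgeFrequency_mul L fun _ => 1
    simp only [mul_one, List.map_const', List.sum_replicate, nsmul_eq_mul] at this
    rw [this, div_self (by simpa using hL)]

lemma isBalanced_edgeFrequency_cyclicPairs (c : List (Fin n)) :
    IsBalanced (edgeFrequency (cyclicPairs c)) := fun v => by
  rw [sum_edgeFrequency_row, sum_edgeFrequency_col, map_fst_cyclicPairs, map_snd_cyclicPairs,
    ((c.rotate_perm 1).map _).sum_eq]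

lemma sum_edgeFrequency_cyclicPairs_mul (c : List (Fin n)) (w : Fin n × Fin n → ℝ) :
    ∑ i, ∑ j, edgeFrequency (cyclicPairs c) i j * w (i, j) = meanWeight w c := by
  rw [sum_edgeFrequency_mul, length_cyclicPairs]
  rfl

end EdgeFrequency

section MinMeanCycle

variable {n : ℕ} {E : Finset (Fin n × Fin n)} {w : Fin n × Fin n → ℝ} {c : List (Fin n)}

lemma IsCycle.length_pos (hc : IsCycle E c) : (0 : ℝ) < c.length := by
  exact_mod_cast List.length_pos_iff.2 hc.1

lemma IsCycle.cyclicPairs_ne_nil (hc : IsCycle E c) : cyclicPairs c ≠ [] := by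
  simpa [← List.length_pos_iff] using hc.1

lemma meanWeight_eq_cycleWeight_div (w : Fin n × Fin n → ℝ) (c : List (Fin n)) :
    meanWeight w c = cycleWeight w c / c.length := rfl

lemma cycleWeight_sub_const (w : Fin n × Fin n → ℝ) (μ : ℝ) (c : List (Fin n)) :
    cycleWeight (fun e => w e - μ) c = cycleWeight w c - c.length * μ := by
  simp only [cycleWeight, sub_eq_add_neg, List.sum_map_add, List.map_const', List.sum_replicate,
    length_cyclicPairs, nsmul_eq_mul, mul_neg]

lemma finite_meanWeights : {x : ℝ | ∃ c, IsCycle E c ∧ meanWeight w c = x}.Finite := by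
  refine ((List.finite_length_le (Fin n) n).image (meanWeight w)).subset ?_
  rintro _ ⟨c, hc, rfl⟩
  exact ⟨c, by simpa using hc.2.1.length_le_card, rfl⟩

lemma exists_isCycle_meanWeight_eq_mmc (h : ∃ c, IsCycle E c) :
    ∃ c, IsCycle E c ∧ meanWeight w c = mmc E w := by
  obtain ⟨c, hc⟩ := h
  exact Set.Nonempty.csInf_mem (s := {x | ∃ c, IsCycle E c ∧ meanWeight w c = x})
    ⟨_, c, hc, rfl⟩ finite_meanWeights

lemma mmc_le_meanWeight (hc : IsCycle E c) : mmc E w ≤ meanWeight w c :=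
  csInf_le finite_meanWeights.bddBelow ⟨c, hc, rfl⟩

lemma cycleWeight_sub_mmc_nonneg (hc : IsCycle E c) :
    0 ≤ cycleWeight (fun e => w e - mmc E w) c := by
  have h := mmc_le_meanWeight (w := w) hc
  rw [meanWeight_eq_cycleWeight_div, le_div_iff₀ hc.length_pos] at h
  rw [cycleWeight_sub_const]
  linarith

lemma le_meanWeight {a : ℝ} (hc : IsCycle E c) (h : ∀ e ∈ E, a ≤ w e) : a ≤ meanWeight w c := by
  rw [meanWeight_eq_cycleWeight_div, le_div_iff₀ hc.length_pos]
  have := List.card_nsmul_le_sum ((cyclicPairs c).map w) a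
    (List.forall_mem_map.2 fun p hp => h p (hc.2.2 p hp))
  simpa [cycleWeight, mul_comm] using this

end MinMeanCycle

/-- **Exact penalty reformulation.** For a strongly connected `G` with diameter at
most `d` and weights of magnitude at most `w_max`, the optimal value of
`min_{P ∈ Δ_E} ⟨P,W⟩ + 3 d w_max ‖P𝟏 - Pᵀ𝟏‖₁` equals `μ(G)`. -/
theorem exact_penalty {n : ℕ} (E : Finset (Fin n × Fin n)) (w : Fin n × Fin n → ℝ)
    (d : ℕ) (wmax : ℝ)
    (hconn : ∀ i j : Fin n, ConnectsWithin E d i j)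
    (hcyc : ∃ c, IsCycle E c)
    (hw : ∀ e ∈ E, |w e| ≤ wmax) :
    sInf {v : ℝ | ∃ P : Matrix (Fin n) (Fin n) ℝ, InDeltaE E P ∧
        v = (∑ i, ∑ j, P i j * w (i, j)) + 3 * d * wmax * imb P} = mmc E w := by
  obtain ⟨c₀, hc₀, hmean⟩ := exists_isCycle_meanWeight_eq_mmc (w := w) hcyc
  have hμ : -wmax ≤ mmc E w := hmean ▸ le_meanWeight hc₀ fun e he => (abs_le.1 (hw e he)).1
  have hwmax : 0 ≤ wmax := by
    obtain ⟨p, hp⟩ := List.exists_mem_of_ne_nil _ hc₀.cyclicPairs_ne_nil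
    exact (abs_nonneg _).trans (hw p (hc₀.2.2 p hp))
  refine IsLeast.csInf_eq ⟨⟨edgeFrequency (cyclicPairs c₀),
    inDeltaE_edgeFrequency hc₀.cyclicPairs_ne_nil hc₀.2.2, ?_⟩, ?_⟩
  · rw [sum_edgeFrequency_cyclicPairs_mul, hmean,
      (isBalanced_edgeFrequency_cyclicPairs c₀).imb_eq_zero, mul_zero, add_zero]
  rintro _ ⟨P, hP, rfl⟩
  obtain ⟨π, hπE, hπB⟩ := exists_potential (W := fun e => w e - mmc E w) (K := 2 * wmax)
    (fun c hc => cycleWeight_sub_mmc_nonneg hc) hconn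
    (fun e he => by linarith [(abs_le.1 (hw e he)).2]) (by positivity) (c₀.head hc₀.1)
  have hdual := sub_mul_imb_le_of_potential hP hπE hπB
  have hpenalty : 0 ≤ d * wmax * imb P := by have := imb_nonneg P; positivity
  linarith
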